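/- Let U be a d×d unitary complex matrix and ρ a d×d complex matrix. Define the forward Choi–Jamiołkowski matrix M = Σ_{i,j} E_{ij} ⊗ (U·E_{ji}·U†), the forward PDM R = ((ρ⊗𝟙)·M + M·(ρ⊗𝟙))/2, the backward Choi–Jamiołkowski matrix M̄ = Σ_{i,j} E_{ij} ⊗ (U†·E_{ji}·U), the output state γ = U·ρ·U†, and the swap operator S = Σ_{i,j} E_{ij} ⊗ E_{ji}. Then S·R·S† = ((γ⊗𝟙)·M̄ + M̄·(γ⊗𝟙))/2. -/

import Mathlib

open Matrix
open scoped Kronecker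

noncomputable def swapM (d : ℕ) : Matrix (Fin d × Fin d) (Fin d × Fin d) ℂ :=
  ∑ i : Fin d, ∑ j : Fin d, single i j (1 : ℂ) ⊗ₖ single j i (1 : ℂ)

lemma swapM_apply (d : ℕ) (a b c e : Fin d) :
    swapM d (a, b) (c, e) = if a = e ∧ b = c then 1 else 0 := by
  simp only [swapM, Matrix.sum_apply, kroneckerMap_apply, Matrix.single, of_apply]
  simp only [mul_ite, mul_one, mul_zero, ite_and]
  rw [Finset.sum_comm]
  simp [Finset.sum_ite_eq, and_comm]
  aesop

lemma swapM_mul_apply (d : ℕ) (X : Matrix (Fin d × Fin d) (Fin d × Fin d) ℂ)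
    (a b : Fin d) (p : Fin d × Fin d) :
    (swapM d * X) (a, b) p = X (b, a) p := by
  rw [mul_apply, Fintype.sum_prod_type]
  simp [swapM_apply, ite_and]

lemma mul_swapM_apply (d : ℕ) (X : Matrix (Fin d × Fin d) (Fin d × Fin d) ℂ)
    (p : Fin d × Fin d) (c e : Fin d) :
    (X * swapM d) p (c, e) = X p (e, c) := by
  rw [mul_apply, Fintype.sum_prod_type]
  simp [swapM_apply, ite_and]

lemma swapM_conjTranspose (d : ℕ) : (swapM d)ᴴ = swapM d := by
  ext ⟨a, b⟩ ⟨c, e⟩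
  simp only [conjTranspose_apply, swapM_apply]
  aesop

lemma swapM_mul_swapM (d : ℕ) : swapM d * swapM d = 1 := by
  ext ⟨a, b⟩ ⟨c, e⟩
  rw [swapM_mul_apply, swapM_apply, one_apply]
  aesop

lemma mul_swapM_swapM (d : ℕ) (X : Matrix (Fin d × Fin d) (Fin d × Fin d) ℂ) :
    X * swapM d * swapM d = X := by
  rw [mul_assoc, swapM_mul_swapM, mul_one]

lemma swap_kron (d : ℕ) (A B : Matrix (Fin d) (Fin d) ℂ) :
    swapM d * (A ⊗ₖ B) = (B ⊗ₖ A) * swapM d := by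
  ext ⟨a, b⟩ ⟨c, e⟩
  rw [swapM_mul_apply, mul_swapM_apply]
  simp [kroneckerMap_apply, mul_comm]

lemma swap_kron_assoc (d : ℕ) (X : Matrix (Fin d × Fin d) (Fin d × Fin d) ℂ)
    (A B : Matrix (Fin d) (Fin d) ℂ) :
    X * swapM d * (A ⊗ₖ B) = X * (B ⊗ₖ A) * swapM d := by
  rw [mul_assoc, swap_kron, ← mul_assoc]

lemma kron_merge_assoc (d : ℕ) (X : Matrix (Fin d × Fin d) (Fin d × Fin d) ℂ)
    (A B C D : Matrix (Fin d) (Fin d) ℂ) :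
    X * (A ⊗ₖ B) * (C ⊗ₖ D) = X * ((A * C) ⊗ₖ (B * D)) := by
  rw [mul_assoc, ← Matrix.mul_kronecker_mul]

lemma kronFact (d : ℕ) (V W : Matrix (Fin d) (Fin d) ℂ) :
    (∑ i : Fin d, ∑ j : Fin d,
      single i j (1 : ℂ) ⊗ₖ (V * single j i (1 : ℂ) * W))
      = (1 ⊗ₖ V) * swapM d * ((1 : Matrix (Fin d) (Fin d) ℂ) ⊗ₖ W) := by
  simp only [swapM, Finset.mul_sum, Finset.sum_mul, ← Matrix.mul_kronecker_mul,
    Matrix.one_mul, Matrix.mul_one]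

lemma div_two_eq (d : ℕ) (X : Matrix (Fin d × Fin d) (Fin d × Fin d) ℂ) :
    X / 2 = (2 : ℂ)⁻¹ • X := by
  have h1 : (2 : Matrix (Fin d × Fin d) (Fin d × Fin d) ℂ)⁻¹ = (2 : ℂ)⁻¹ • 1 := by
    apply Matrix.inv_eq_right_inv
    rw [mul_smul_comm, mul_one]
    ext i j
    by_cases h : i = j <;>
      simp [← one_add_one_eq_two, Matrix.add_apply, Matrix.one_apply,
        Matrix.smul_apply, h]
  rw [div_eq_mul_inv, h1, mul_smul_comm, mul_one]

/-- For unitary dynamics, the backward PDM `S R S†` equals the forward closed form built from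
the output state `γ = U ρ U†` and the backward Choi matrix `M̄ = Σ E_{ij} ⊗ (U† E_{ji} U)`. -/
theorem backward_pdm_unitary (d : ℕ)
    (U : Matrix (Fin d) (Fin d) ℂ) (hU : U * Uᴴ = 1 ∧ Uᴴ * U = 1)
    (ρ : Matrix (Fin d) (Fin d) ℂ)
    (M : Matrix (Fin d × Fin d) (Fin d × Fin d) ℂ)
    (hM : M = ∑ i : Fin d, ∑ j : Fin d,
      single i j (1 : ℂ) ⊗ₖ (U * single j i (1 : ℂ) * Uᴴ))
    (R : Matrix (Fin d × Fin d) (Fin d × Fin d) ℂ)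
    (hR : R = ((ρ ⊗ₖ (1 : Matrix (Fin d) (Fin d) ℂ)) * M
      + M * (ρ ⊗ₖ (1 : Matrix (Fin d) (Fin d) ℂ))) / 2)
    (Mbar : Matrix (Fin d × Fin d) (Fin d × Fin d) ℂ)
    (hMbar : Mbar = ∑ i : Fin d, ∑ j : Fin d,
      single i j (1 : ℂ) ⊗ₖ (Uᴴ * single j i (1 : ℂ) * U))
    (γ : Matrix (Fin d) (Fin d) ℂ) (hγ : γ = U * ρ * Uᴴ)
    (S : Matrix (Fin d × Fin d) (Fin d × Fin d) ℂ)
    (hS : S = ∑ i : Fin d, ∑ j : Fin d,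
      single i j (1 : ℂ) ⊗ₖ single j i (1 : ℂ)) :
    S * R * Sᴴ = ((γ ⊗ₖ (1 : Matrix (Fin d) (Fin d) ℂ)) * Mbar
      + Mbar * (γ ⊗ₖ (1 : Matrix (Fin d) (Fin d) ℂ))) / 2 := by
  obtain ⟨hU1, hU2⟩ := hU
  have hS' : S = swapM d := hS
  have hM' : M = (1 ⊗ₖ U) * swapM d * ((1 : Matrix (Fin d) (Fin d) ℂ) ⊗ₖ Uᴴ) := by
    rw [hM, kronFact]
  have hMb' : Mbar = (1 ⊗ₖ Uᴴ) * swapM d * ((1 : Matrix (Fin d) (Fin d) ℂ) ⊗ₖ U) := by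
    rw [hMbar, kronFact]
  subst hS' hM' hMb' hγ hR
  rw [div_two_eq, div_two_eq, swapM_conjTranspose, mul_smul_comm, smul_mul_assoc]
  congr 1
  have hUr : ∀ X : Matrix (Fin d) (Fin d) ℂ, X * Uᴴ * U = X := fun X => by
    rw [mul_assoc, hU2, mul_one]
  have hUr' : ∀ X : Matrix (Fin d) (Fin d) ℂ, X * U * Uᴴ = X := fun X => by
    rw [mul_assoc, hU1, mul_one]
  have kron_merge : ∀ (A B C D : Matrix (Fin d) (Fin d) ℂ),
      (A ⊗ₖ B) * (C ⊗ₖ D) = (A * C) ⊗ₖ (B * D) :=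
    fun A B C D => (Matrix.mul_kronecker_mul A C B D).symm
  simp only [mul_add, add_mul, ← mul_assoc, swap_kron, swap_kron_assoc,
    mul_swapM_swapM, swapM_mul_swapM, kron_merge, kron_merge_assoc,
    Matrix.one_mul, Matrix.mul_one, hU1, hU2, hUr, hUr', one_mul, mul_one]
  rw [add_comm]
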